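/- Let 𝓡 be a reaction network on d ≥ 3 species with complex set C, and let 𝓡̄ ⊆ 𝓡 be a subnetwork all of whose complexes are supported on the coordinates {1,2} (i.e., for every y → y' ∈ 𝓡̄ and every k ≥ 3, (y)_k = (y')_k = 0), with complex set C̄ ⊆ C. Suppose 𝓡̄ contains the reactions y*_1 → y*_2, …, y*_{M−1} → y*_M, y*_M → y*_1 and that: (1) {y*_1,…,y*_M} can be enumerated as ȳ_1 < ȳ_2 < … < ȳ_M, where < is the strict order on the first two coordinates; (2) there exists i_1 ∈ {1,2} with (ȳ_m)_{i_1} < (ȳ_{m'})_{i_1} − (ȳ_1)_{i_1} for all 1 ≤ m < m' ≤ M; (3) for each m, the only reaction of the full network 𝓡 with source complex y*_m is y*_m → y*_{m+1} (with y*_{M+1} = y*_1); (4) with i_2 ∈ {1,2}, i_2 ≠ i_1, and f defined by f(ℓ) = 0 for ℓ < (ȳ_1)_{i_1}, f(ℓ) = (ȳ_m)_{i_2} for (ȳ_m)_{i_1} ≤ ℓ < (ȳ_{m+1})_{i_1}, f(ℓ) = (ȳ_M)_{i_2} for ℓ ≥ (ȳ_M)_{i_1}, every complex y ∈ C̄ \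 {ȳ_1,…,ȳ_M} satisfies f((y)_{i_1} + (ȳ_1)_{i_1}) < (y)_{i_2}; (5) every complex y ∈ C \ C̄ satisfies either (y)_{i_2} > f((y)_{i_1} + (ȳ_1)_{i_1}) or (y)_k > 0 for some k ≥ 3. Then R = (y*_1 → y*_2, …, y*_M → y*_1) is a strong tier-1 cycle along the sequence {x_n}_{n≥1} defined by (x_n)_{i_1} = n + (y*_1)_{i_1}, (x_n)_{i_2} = (y*_1)_{i_2}, and (x_n)_k = 0 for k ≥ 3. -/
import Mathlib


open Filter Finset

/-- A reaction network on `d` species: every reaction has a nonnegative source complex and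
a nonnegative product complex, and the source differs from the product. -/
def IsRN (d : ℕ) (Rn : Finset ((Fin d → ℤ) × (Fin d → ℤ))) : Prop :=
  ∀ r ∈ Rn, (∀ i, 0 ≤ r.1 i) ∧ (∀ i, 0 ≤ r.2 i) ∧ r.1 ≠ r.2

/-- Mass-action intensity `λ_y(x) = ∏ i, x_i!/(x_i - y_i)!` if `x ≥ y` componentwise, else `0`. -/
def intensity (d : ℕ) (y x : Fin d → ℤ) : ℕ :=
  if ∀ i, y i ≤ x i then ∏ i : Fin d, Nat.descFactorial (x i).toNat ((y i).toNat) else 0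

/-- Cyclic successor on `{1, …, M}`: `cyc M m = m + 1` for `m < M` and `cyc M M = 1`. -/
def cyc (M m : ℕ) : ℕ := if m = M then 1 else m + 1

/-- `xshift d ystar x m n = x^m_n = x_n + ∑_{j=1}^{m-1} (y*_{j+1} - y*_j)`. -/
def xshift (d : ℕ) (ystar : ℕ → Fin d → ℤ) (x : ℕ → Fin d → ℤ) (m n : ℕ) : Fin d → ℤ :=
  fun i => x n i + ∑ j ∈ Finset.Ico 1 m, (ystar (j + 1) i - ystar j i)

/-- The ordered list `(y*_1 → y*_2, …, y*_M → y*_1)` consists of reactions of the network. -/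
def IsCycleIn (d : ℕ) (Rn : Finset ((Fin d → ℤ) × (Fin d → ℤ))) (M : ℕ)
    (ystar : ℕ → Fin d → ℤ) : Prop :=
  ∀ m, 1 ≤ m → m ≤ M → (ystar m, ystar (cyc M m)) ∈ Rn

/-- Condition (ii) of a strong tier-1 cycle, with explicit witness `m0`. -/
def TierLimits (d : ℕ) (Rn : Finset ((Fin d → ℤ) × (Fin d → ℤ))) (M : ℕ)
    (ystar : ℕ → Fin d → ℤ) (x : ℕ → Fin d → ℤ) (m0 : ℕ) : Prop :=
  ∀ m, 1 ≤ m → m ≤ M → ∀ y y' : Fin d → ℤ, (y, y') ∈ Rn →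
    (y, y') ≠ (ystar m, ystar (cyc M m)) →
    Tendsto (fun n =>
        ((intensity d (ystar m0) (xshift d ystar x m0 n) : ℝ) *
          (intensity d y (xshift d ystar x m n) : ℝ)) /
          (intensity d (ystar m) (xshift d ystar x m n) : ℝ))
      atTop (nhds 0)

/-- `R = (y*_1 → y*_2, …, y*_M → y*_1)` is a strong tier-1 cycle along `x`. -/
def IsStrongT1Cycle (d : ℕ) (Rn : Finset ((Fin d → ℤ) × (Fin d → ℤ))) (M : ℕ)
    (ystar : ℕ → Fin d → ℤ) (x : ℕ → Fin d → ℤ) : Prop :=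
  IsCycleIn d Rn M ystar ∧
  (∀ n, 0 < intensity d (ystar 1) (x n)) ∧
  ∃ m0, 1 ≤ m0 ∧ m0 ≤ M ∧ TierLimits d Rn M ystar x m0

/-- `y` is a source complex of the network. -/
def IsSourceIn (d : ℕ) (Rn : Finset ((Fin d → ℤ) × (Fin d → ℤ))) (y : Fin d → ℤ) : Prop :=
  ∃ y', (y, y') ∈ Rn

/-- `y` is a complex (source or product) of the network. -/
def ComplexOf (d : ℕ) (Rn : Finset ((Fin d → ℤ) × (Fin d → ℤ))) (y : Fin d → ℤ) : Prop :=
  ∃ r ∈ Rn, r.1 = y ∨ r.2 = y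

/-- Tier sequence of a reaction network. -/
def IsTierSeq (d : ℕ) (Rn : Finset ((Fin d → ℤ) × (Fin d → ℤ)))
    (x : ℕ → Fin d → ℤ) : Prop :=
  (∀ n i, 0 ≤ x n i) ∧
  (∃ i, Tendsto (fun n => x n i) atTop atTop) ∧
  (∀ i, (Tendsto (fun n => x n i) atTop atTop ∧ Monotone fun n => x n i) ∨
      (∃ c : ℤ, ∀ n, x n i = c)) ∧
  (∀ y y' : Fin d → ℤ, IsSourceIn d Rn y → IsSourceIn d Rn y' →
    (Tendsto (fun n => (intensity d y (x n) : ℝ) / (intensity d y' (x n) : ℝ)) atTop atTop ∨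
      ∃ c : ℝ, Tendsto (fun n => (intensity d y (x n) : ℝ) / (intensity d y' (x n) : ℝ))
        atTop (nhds c)))

/-- One reaction step: some reaction `y → y'` with `y ≤ a` fires, giving `b = a + y' - y`. -/
def ReactStep (d : ℕ) (Rn : Finset ((Fin d → ℤ) × (Fin d → ℤ)))
    (a b : Fin d → ℤ) : Prop :=
  ∃ r ∈ Rn, (∀ i, r.1 i ≤ a i) ∧ b = fun i => a i + (r.2 i - r.1 i)

/-- `w` is reachable from `z` by finitely many reaction steps. -/
def Reachable (d : ℕ) (Rn : Finset ((Fin d → ℤ) × (Fin d → ℤ)))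
    (z w : Fin d → ℤ) : Prop :=
  Relation.ReflTransGen (ReactStep d Rn) z w

/-- Weak reversibility: every reaction lies on a directed cycle of reactions. -/
def WeaklyReversible (d : ℕ) (Rn : Finset ((Fin d → ℤ) × (Fin d → ℤ))) : Prop :=
  ∀ r ∈ Rn, ∃ (K : ℕ) (ys : ℕ → Fin d → ℤ), 2 ≤ K ∧
    ys 1 = r.1 ∧ ys 2 = r.2 ∧
    (∀ j, 1 ≤ j → j < K → (ys j, ys (j + 1)) ∈ Rn) ∧
    (ys K, ys 1) ∈ Rn


section Aux

private lemma dF_pos {n k : ℕ} (h : k ≤ n) : 0 < n.descFactorial k :=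
  Nat.pos_of_ne_zero fun h0 =>
    absurd (Nat.descFactorial_eq_zero_iff_lt.mp h0) (not_lt.mpr h)

private lemma intensity_pos' {d : ℕ} {y xv : Fin d → ℤ} (h : ∀ i, y i ≤ xv i) :
    0 < intensity d y xv := by
  rw [intensity, if_pos h]
  exact Finset.prod_pos fun i _ => dF_pos (Int.toNat_le_toNat (h i))

private lemma intensity_zero' {d : ℕ} {y xv : Fin d → ℤ} (j : Fin d) (hj : xv j < y j) :
    intensity d y xv = 0 := by
  rw [intensity, if_neg]
  exact fun h => absurd (h j) (not_le.mpr hj)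

private lemma intensity_supp_eq {d : ℕ} {i1 i2 : Fin d} (h12 : i1 ≠ i2) {A B : ℤ}
    {y : Fin d → ℤ} (hy : ∀ j, j ≠ i1 → j ≠ i2 → y j = 0) (h1 : y i1 ≤ A) (h2 : y i2 ≤ B) :
    intensity d y (fun i => if i = i1 then A else if i = i2 then B else 0)
      = A.toNat.descFactorial (y i1).toNat * B.toNat.descFactorial (y i2).toNat := by
  have hguard : ∀ i, y i ≤ (if i = i1 then A else if i = i2 then B else 0 : ℤ) := by
    intro i
    rcases eq_or_ne i i1 with rfl | g1
    · simpa using h1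
    rcases eq_or_ne i i2 with rfl | g2
    · simpa [Ne.symm h12] using h2
    · simp [g1, g2, hy i g1 g2]
  rw [intensity, if_pos hguard]
  have hout : ∀ j ∈ (Finset.univ : Finset (Fin d)), j ∉ ({i1, i2} : Finset (Fin d)) →
      ((if j = i1 then A else if j = i2 then B else 0 : ℤ)).toNat.descFactorial
        ((y j).toNat) = 1 := by
    intro j _ hj
    simp only [Finset.mem_insert, Finset.mem_singleton, not_or] at hj
    simp [hj.1, hj.2, hy j hj.1 hj.2]
  rw [← Finset.prod_subset (Finset.subset_univ ({i1, i2} : Finset (Fin d))) hout,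
    Finset.prod_pair h12]
  congr 2 <;> simp [Ne.symm h12]

private lemma intensity_supp_le {d : ℕ} {i1 i2 : Fin d} (h12 : i1 ≠ i2) {A B : ℤ}
    {y : Fin d → ℤ} (hy : ∀ j, j ≠ i1 → j ≠ i2 → y j = 0) :
    intensity d y (fun i => if i = i1 then A else if i = i2 then B else 0)
      ≤ A.toNat.descFactorial (y i1).toNat * B.toNat.descFactorial (y i2).toNat := by
  by_cases h1 : y i1 ≤ A
  · by_cases h2 : y i2 ≤ B
    · exact le_of_eq (intensity_supp_eq h12 hy h1 h2)
    · rw [intensity_zero' i2 (by simp [Ne.symm h12]; omega)]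
      exact Nat.zero_le _
  · rw [intensity_zero' i1 (by simp; omega)]
    exact Nat.zero_le _

private lemma pow_ratio_bound (b0 b e : ℕ) {X : ℝ} (hX : 2 ≤ X) :
    (2 * X) ^ b0 * (2 * X) ^ b / (X / 2) ^ (b0 + b + (e + 1))
      ≤ 4 ^ (b0 + b) * 2 / X := by
  have hX0 : (0 : ℝ) < X := by linarith
  have h2 : (1 : ℝ) ≤ X / 2 := by linarith
  have hpos : (0 : ℝ) < (X / 2) ^ (b0 + b + (e + 1)) := by positivity
  rw [div_le_div_iff₀ hpos hX0]
  have hstep : (X / 2) ≤ (X / 2) ^ (e + 1) := le_self_pow₀ h2 (Nat.succ_ne_zero e)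
  have hb4 : (2 * X) ^ (b0 + b) = 4 ^ (b0 + b) * (X / 2) ^ (b0 + b) := by
    rw [← mul_pow]; congr 1; ring
  calc (2 * X) ^ b0 * (2 * X) ^ b * X = 4 ^ (b0 + b) * (X / 2) ^ (b0 + b) * X := by
        rw [← pow_add, hb4]
    _ = (4 ^ (b0 + b) * 2) * ((X / 2) ^ (b0 + b) * (X / 2)) := by ring
    _ ≤ (4 ^ (b0 + b) * 2) * ((X / 2) ^ (b0 + b) * (X / 2) ^ (e + 1)) := by
        have hnn : (0 : ℝ) ≤ (X / 2) ^ (b0 + b) := by positivity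
        have hC : (0 : ℝ) ≤ 4 ^ (b0 + b) * 2 := by positivity
        exact mul_le_mul_of_nonneg_left (mul_le_mul_of_nonneg_left hstep hnn) hC
    _ = (4 ^ (b0 + b) * 2) * (X / 2) ^ (b0 + b + (e + 1)) := by rw [pow_add (X / 2) (b0 + b) (e + 1)]

private lemma ratio_tendsto (a0 b0 a b am bm c0 c cm : ℕ) (hcm : 0 < cm)
    (hb : b0 + b < bm) (F : ℕ → ℝ) (h0 : ∀ n, 0 ≤ F n)
    (hle : ∀ n, F n ≤ (((n + a0).descFactorial b0 : ℝ) * c0 *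
        (((n + a).descFactorial b : ℝ) * c)) / (((n + am).descFactorial bm : ℝ) * cm)) :
    Filter.Tendsto F Filter.atTop (nhds 0) := by
  obtain ⟨e, he⟩ : ∃ e, bm = b0 + b + (e + 1) := ⟨bm - (b0 + b) - 1, by omega⟩
  subst he
  refine squeeze_zero' (Filter.Eventually.of_forall h0) ?_
    (tendsto_const_div_atTop_nhds_zero_nat
      ((c0 : ℝ) * c / cm * (4 ^ (b0 + b) * 2)))
  filter_upwards [Filter.eventually_ge_atTop (2 * (b0 + b + (e + 1)) + a0 + a + 2)] with n hn
  refine le_trans (hle n) ?_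
  set bm := b0 + b + (e + 1) with hbm
  have hX2 : (2 : ℝ) ≤ (n : ℝ) := by exact_mod_cast (by omega : 2 ≤ n)
  have hX0 : (0 : ℝ) < (n : ℝ) := by linarith
  have hD0 : ((n + a0).descFactorial b0 : ℝ) ≤ (2 * (n : ℝ)) ^ b0 := by
    have h1 : (n + a0).descFactorial b0 ≤ (2 * n) ^ b0 :=
      le_trans (Nat.descFactorial_le_pow _ _) (Nat.pow_le_pow_left (by omega) _)
    calc ((n + a0).descFactorial b0 : ℝ) ≤ (((2 * n) ^ b0 : ℕ) : ℝ) := by exact_mod_cast h1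
      _ = (2 * (n : ℝ)) ^ b0 := by push_cast; ring
  have hD : ((n + a).descFactorial b : ℝ) ≤ (2 * (n : ℝ)) ^ b := by
    have h1 : (n + a).descFactorial b ≤ (2 * n) ^ b :=
      le_trans (Nat.descFactorial_le_pow _ _) (Nat.pow_le_pow_left (by omega) _)
    calc ((n + a).descFactorial b : ℝ) ≤ (((2 * n) ^ b : ℕ) : ℝ) := by exact_mod_cast h1
      _ = (2 * (n : ℝ)) ^ b := by push_cast; ring
  have hDm : ((n : ℝ) / 2) ^ bm ≤ ((n + am).descFactorial bm : ℝ) := by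
    have h1 : (n + am + 1 - bm) ^ bm ≤ (n + am).descFactorial bm :=
      Nat.pow_sub_le_descFactorial _ _
    have h2 : (n : ℝ) / 2 ≤ ((n + am + 1 - bm : ℕ) : ℝ) := by
      have hbmle : bm ≤ n + am + 1 := by omega
      rw [Nat.cast_sub hbmle]
      push_cast
      have hb2 : ((2 * bm : ℕ) : ℝ) ≤ (n : ℝ) := by exact_mod_cast (by omega : 2 * bm ≤ n)
      push_cast at hb2
      linarith
    calc ((n : ℝ) / 2) ^ bm ≤ (((n + am + 1 - bm : ℕ) : ℝ)) ^ bm :=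
          pow_le_pow_left₀ (by positivity) h2 _
      _ ≤ ((n + am).descFactorial bm : ℝ) := by exact_mod_cast h1
  have hdfmpos : (0 : ℝ) < ((n + am).descFactorial bm : ℝ) := by
    have : 0 < (n + am).descFactorial bm := dF_pos (by omega)
    exact_mod_cast this
  have hcm' : (0 : ℝ) < (cm : ℝ) := by exact_mod_cast hcm
  calc (((n + a0).descFactorial b0 : ℝ) * c0 * (((n + a).descFactorial b : ℝ) * c)) /
        (((n + am).descFactorial bm : ℝ) * cm)
      ≤ ((2 * (n : ℝ)) ^ b0 * c0 * ((2 * (n : ℝ)) ^ b * c)) / (((n : ℝ) / 2) ^ bm * cm) := by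
        apply div_le_div₀ (by positivity) ?_ (by positivity) ?_
        · apply mul_le_mul ?_ ?_ (by positivity) (by positivity)
          · exact mul_le_mul_of_nonneg_right hD0 (by positivity)
          · exact mul_le_mul_of_nonneg_right hD (by positivity)
        · exact mul_le_mul_of_nonneg_right hDm (le_of_lt hcm')
    _ = (c0 : ℝ) * c / cm * ((2 * (n : ℝ)) ^ b0 * (2 * (n : ℝ)) ^ b / ((n : ℝ) / 2) ^ bm) := by
        field_simp
    _ ≤ (c0 : ℝ) * c / cm * (4 ^ (b0 + b) * 2 / (n : ℝ)) := by
        apply mul_le_mul_of_nonneg_left (pow_ratio_bound b0 b e hX2) (by positivity)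
    _ = (c0 : ℝ) * c / cm * (4 ^ (b0 + b) * 2) / (n : ℝ) := by ring

end Aux

/-- Corollary 4 (structural part): a network on `d ≥ 3` species with a two-species subnetwork
satisfying the Corollary 3 conditions, such that each extra complex has either a large second
coordinate or contains one of the species `3,…,d`, admits a strong tier-1 cycle along the
explicit sequence. -/
theorem stmt9 {d M : ℕ} (hd : 3 ≤ d) (hM : 1 ≤ M)
    (Rn Rbar : Finset ((Fin d → ℤ) × (Fin d → ℤ))) (hRn : IsRN d Rn)
    (hsub : Rbar ⊆ Rn)
    (hsupp : ∀ r ∈ Rbar, ∀ k : Fin d, 2 ≤ (k : ℕ) → r.1 k = 0 ∧ r.2 k = 0)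
    (ystar ybar : ℕ → Fin d → ℤ)
    (hmem : ∀ m, 1 ≤ m → m ≤ M → (ystar m, ystar (cyc M m)) ∈ Rbar)
    (i1 i2 : Fin d) (hi1lt : (i1 : ℕ) < 2) (hi2lt : (i2 : ℕ) < 2) (hne : i2 ≠ i1)
    (hset : ∀ y : Fin d → ℤ,
      (∃ m, 1 ≤ m ∧ m ≤ M ∧ ystar m = y) ↔ (∃ k, 1 ≤ k ∧ k ≤ M ∧ ybar k = y))
    (hord : ∀ m, 1 ≤ m → m < M →
      ybar m i1 < ybar (m + 1) i1 ∧ ybar m i2 < ybar (m + 1) i2)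
    (hgap : ∀ m m', 1 ≤ m → m < m' → m' ≤ M → ybar m i1 < ybar m' i1 - ybar 1 i1)
    (honly : ∀ m, 1 ≤ m → m ≤ M → ∀ y' : Fin d → ℤ, (ystar m, y') ∈ Rn →
      y' = ystar (cyc M m))
    (f : ℤ → ℤ)
    (hf0 : ∀ ℓ, 0 ≤ ℓ → ℓ < ybar 1 i1 → f ℓ = 0)
    (hfm : ∀ m, 1 ≤ m → m ≤ M - 1 → ∀ ℓ, ybar m i1 ≤ ℓ → ℓ < ybar (m + 1) i1 →
      f ℓ = ybar m i2)
    (hfM : ∀ ℓ, ybar M i1 ≤ ℓ → f ℓ = ybar M i2)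
    (hcompbar : ∀ y : Fin d → ℤ, ComplexOf d Rbar y →
      (∀ k, 1 ≤ k → k ≤ M → y ≠ ybar k) → f (y i1 + ybar 1 i1) < y i2)
    (hcompfull : ∀ y : Fin d → ℤ, ComplexOf d Rn y → ¬ ComplexOf d Rbar y →
      (f (y i1 + ybar 1 i1) < y i2 ∨ ∃ k : Fin d, 2 ≤ (k : ℕ) ∧ 0 < y k)) :
    IsStrongT1Cycle d Rn M ystar
      (fun n i => if i = i1 then ((n : ℤ) + 1) + ystar 1 i
        else if i = i2 then ystar 1 i else 0) := by
  have hne' : i1 ≠ i2 := Ne.symm hne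
  -- coordinates other than i1, i2 have value ≥ 2
  have hval : ∀ j : Fin d, j ≠ i1 → j ≠ i2 → 2 ≤ (j : ℕ) := by
    intro j h1 h2
    by_contra h
    push_neg at h
    have e1 : (j : ℕ) ≠ (i1 : ℕ) := fun e => h1 (Fin.ext e)
    have e2 : (j : ℕ) ≠ (i2 : ℕ) := fun e => h2 (Fin.ext e)
    have e3 : (i1 : ℕ) ≠ (i2 : ℕ) := fun e => hne' (Fin.ext e)
    omega
  have hyst : ∀ m', 1 ≤ m' → m' ≤ M → ∀ j, j ≠ i1 → j ≠ i2 → ystar m' j = 0 :=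
    fun m' h1 h2 j hj1 hj2 => (hsupp _ (hmem m' h1 h2) j (hval j hj1 hj2)).1
  have hynn : ∀ m', 1 ≤ m' → m' ≤ M → ∀ i, 0 ≤ ystar m' i :=
    fun m' h1 h2 i => (hRn _ (hsub (hmem m' h1 h2))).1 i
  have hybeq : ∀ k, 1 ≤ k → k ≤ M → ∃ m', 1 ≤ m' ∧ m' ≤ M ∧ ystar m' = ybar k :=
    fun k h1 h2 => (hset (ybar k)).mpr ⟨k, h1, h2, rfl⟩
  -- monotonicity of ybar in the i2 coordinate
  have hmono2 : ∀ k', k' ≤ M → ∀ kk, 1 ≤ kk → kk < k' → ybar kk i2 < ybar k' i2 := by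
    intro k'
    induction k' with
    | zero => intro _ kk _ h; exact absurd h (Nat.not_lt_zero kk)
    | succ K ih =>
      intro hK kk hkk hlt
      have hk : kk ≤ K := by omega
      rcases eq_or_lt_of_le hk with rfl | hlt2
      · exact (hord kk hkk (by omega)).2
      · exact lt_trans (ih (by omega) kk hkk hlt2) (hord K (by omega) (by omega)).2
  -- lower bound on f to the right of ybar k i1
  have flb : ∀ t k, 1 ≤ k → k ≤ M → M ≤ k + t → ∀ ℓ, ybar k i1 ≤ ℓ → ybar k i2 ≤ f ℓ := by
    intro t
    induction t with
    | zero =>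
      intro k h1 h2 ht ℓ hℓ
      have hk : k = M := by omega
      subst hk
      exact le_of_eq (hfM ℓ hℓ).symm
    | succ T ih =>
      intro k h1 h2 ht ℓ hℓ
      rcases eq_or_lt_of_le h2 with rfl | hlt
      · exact le_of_eq (hfM ℓ hℓ).symm
      · by_cases hc : ℓ < ybar (k + 1) i1
        · exact le_of_eq (hfm k h1 (by omega) ℓ hℓ hc).symm
        · push_neg at hc
          exact le_trans (le_of_lt (hord k h1 hlt).2)
            (ih (k + 1) (by omega) (by omega) (by omega) ℓ hc)
  -- telescoping
  have tele : ∀ (g : ℕ → ℤ) (m' : ℕ), 1 ≤ m' →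
      ∑ j ∈ Finset.Ico 1 m', (g (j + 1) - g j) = g m' - g 1 := by
    intro g m' h
    induction m' with
    | zero => exact absurd h (by omega)
    | succ K ih =>
      rcases Nat.eq_or_lt_of_le h with h1 | h1
      · rw [← h1]; simp
      · have hK : 1 ≤ K := by omega
        rw [Finset.sum_Ico_succ_top hK, ih hK]; ring
  -- the value of the shifted sequence
  have hx : ∀ m', 1 ≤ m' → m' ≤ M → ∀ n : ℕ,
      xshift d ystar (fun n i => if i = i1 then ((n : ℤ) + 1) + ystar 1 i
        else if i = i2 then ystar 1 i else 0) m' n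
      = fun i => if i = i1 then ((n : ℤ) + 1) + ystar m' i1
          else if i = i2 then ystar m' i2 else 0 := by
    intro m' h1 h2 n
    funext i
    simp only [xshift]
    rw [tele (fun j => ystar j i) m' h1]
    rcases eq_or_ne i i1 with rfl | g1
    · rw [if_pos rfl, if_pos rfl]; ring
    rcases eq_or_ne i i2 with rfl | g2
    · rw [if_neg g1, if_neg g1, if_pos rfl, if_pos rfl]; ring
    · rw [if_neg g1, if_neg g1, if_neg g2, if_neg g2]
      rw [hyst m' h1 h2 i g1 g2, hyst 1 le_rfl hM i g1 g2]
      ring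
  refine ⟨fun m h1 h2 => hsub (hmem m h1 h2), ?_, ?_⟩
  · -- positivity of the initial intensity
    intro n
    apply intensity_pos'
    intro i
    simp only
    rcases eq_or_ne i i1 with rfl | g1
    · rw [if_pos rfl]
      have : (0 : ℤ) ≤ (n : ℤ) := Int.natCast_nonneg n
      linarith
    rcases eq_or_ne i i2 with rfl | g2
    · rw [if_neg g1, if_pos rfl]
    · rw [if_neg g1, if_neg g2, hyst 1 le_rfl hM i g1 g2]
  -- the tier limits
  obtain ⟨m0, hm01, hm0M, hym0⟩ : ∃ m0, 1 ≤ m0 ∧ m0 ≤ M ∧ ystar m0 = ybar 1 :=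
    (hset (ybar 1)).mpr ⟨1, le_rfl, hM, rfl⟩
  refine ⟨m0, hm01, hm0M, ?_⟩
  intro m hm1 hmM y y' hr hpne
  simp only [hx m hm1 hmM, hx m0 hm01 hm0M]
  by_cases hA : ∃ j, j ≠ i1 ∧ j ≠ i2 ∧ 0 < y j
  · obtain ⟨j, hj1, hj2, hj⟩ := hA
    have hz : ∀ n : ℕ, intensity d y (fun i => if i = i1 then ((n : ℤ) + 1) + ystar m i1
        else if i = i2 then ystar m i2 else 0) = 0 := by
      intro n
      apply intensity_zero' j
      simp only [if_neg hj1, if_neg hj2]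
      exact hj
    simp only [hz, Nat.cast_zero, mul_zero, zero_div]
    exact tendsto_const_nhds
  push_neg at hA
  have hysupp : ∀ j, j ≠ i1 → j ≠ i2 → y j = 0 :=
    fun j h1 h2 => le_antisymm (hA j h1 h2) ((hRn _ hr).1 j)
  have hynny : ∀ i, 0 ≤ y i := (hRn _ hr).1
  by_cases hB : ystar m i2 < y i2
  · have hz : ∀ n : ℕ, intensity d y (fun i => if i = i1 then ((n : ℤ) + 1) + ystar m i1
        else if i = i2 then ystar m i2 else 0) = 0 := by
      intro n
      apply intensity_zero' i2
      simp only [if_neg hne, if_pos rfl]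
      exact hB
    simp only [hz, Nat.cast_zero, mul_zero, zero_div]
    exact tendsto_const_nhds
  push_neg at hB
  obtain ⟨k, hk1, hkM, hbk⟩ : ∃ k, 1 ≤ k ∧ k ≤ M ∧ ybar k = ystar m :=
    (hset (ystar m)).mp ⟨m, hm1, hmM, rfl⟩
  -- the generic convergence argument
  have Hconv : ∀ z : Fin d → ℤ, (∀ j, j ≠ i1 → j ≠ i2 → z j = 0) → (∀ i, 0 ≤ z i) →
      z i2 ≤ ystar m i2 → ystar m0 i1 + z i1 < ystar m i1 →
      Filter.Tendsto (fun n : ℕ =>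
        ((intensity d (ystar m0) (fun i => if i = i1 then ((n : ℤ) + 1) + ystar m0 i1
            else if i = i2 then ystar m0 i2 else 0) : ℝ) *
          (intensity d z (fun i => if i = i1 then ((n : ℤ) + 1) + ystar m i1
            else if i = i2 then ystar m i2 else 0) : ℝ)) /
          (intensity d (ystar m) (fun i => if i = i1 then ((n : ℤ) + 1) + ystar m i1
            else if i = i2 then ystar m i2 else 0) : ℝ))
        Filter.atTop (nhds 0) := by
    intro z hzsupp hznn hz2 hz1
    have e0 := hynn m0 hm01 hm0M i1
    have em := hynn m hm1 hmM i1
    have ez := hznn i1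
    apply ratio_tendsto (1 + (ystar m0 i1).toNat) (ystar m0 i1).toNat
      (1 + (ystar m i1).toNat) (z i1).toNat (1 + (ystar m i1).toNat) (ystar m i1).toNat
      ((ystar m0 i2).toNat.descFactorial (ystar m0 i2).toNat)
      ((ystar m i2).toNat.descFactorial (z i2).toNat)
      ((ystar m i2).toNat.descFactorial (ystar m i2).toNat)
      (dF_pos le_rfl) (by omega)
    · intro n
      positivity
    · intro n
      have hn0 : (0 : ℤ) ≤ (n : ℤ) := Int.natCast_nonneg n
      have hAeq0 : (((n : ℤ) + 1) + ystar m0 i1).toNat = n + (1 + (ystar m0 i1).toNat) := by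
        omega
      have hAeqm : (((n : ℤ) + 1) + ystar m i1).toNat = n + (1 + (ystar m i1).toNat) := by
        omega
      have hIm : intensity d (ystar m) (fun i => if i = i1 then ((n : ℤ) + 1) + ystar m i1
          else if i = i2 then ystar m i2 else 0)
          = (n + (1 + (ystar m i1).toNat)).descFactorial (ystar m i1).toNat *
            (ystar m i2).toNat.descFactorial (ystar m i2).toNat := by
        rw [intensity_supp_eq hne' (hyst m hm1 hmM) (by linarith) le_rfl, hAeqm]
      have hI0 : intensity d (ystar m0) (fun i => if i = i1 then ((n : ℤ) + 1) + ystar m0 i1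
          else if i = i2 then ystar m0 i2 else 0)
          ≤ (n + (1 + (ystar m0 i1).toNat)).descFactorial (ystar m0 i1).toNat *
            (ystar m0 i2).toNat.descFactorial (ystar m0 i2).toNat := by
        rw [← hAeq0]
        exact intensity_supp_le hne' (hyst m0 hm01 hm0M)
      have hIz : intensity d z (fun i => if i = i1 then ((n : ℤ) + 1) + ystar m i1
          else if i = i2 then ystar m i2 else 0)
          ≤ (n + (1 + (ystar m i1).toNat)).descFactorial (z i1).toNat *
            (ystar m i2).toNat.descFactorial (z i2).toNat := by
        rw [← hAeqm]
        exact intensity_supp_le hne' hzsupp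
      rw [hIm]
      push_cast
      have hdpos : (0 : ℝ) <
          ((n + (1 + (ystar m i1).toNat)).descFactorial (ystar m i1).toNat : ℝ) *
            ((ystar m i2).toNat.descFactorial (ystar m i2).toNat : ℝ) := by
        have p1 : 0 < (n + (1 + (ystar m i1).toNat)).descFactorial (ystar m i1).toNat :=
          dF_pos (by omega)
        have p2 : 0 < (ystar m i2).toNat.descFactorial (ystar m i2).toNat := dF_pos le_rfl
        have p1' : (0 : ℝ) <
            ((n + (1 + (ystar m i1).toNat)).descFactorial (ystar m i1).toNat : ℝ) := by
          exact_mod_cast p1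
        have p2' : (0 : ℝ) < ((ystar m i2).toNat.descFactorial (ystar m i2).toNat : ℝ) := by
          exact_mod_cast p2
        exact mul_pos p1' p2'
      rw [div_le_div_iff_of_pos_right hdpos]
      have c0' : ((intensity d (ystar m0) (fun i => if i = i1 then ((n : ℤ) + 1) + ystar m0 i1
          else if i = i2 then ystar m0 i2 else 0) : ℕ) : ℝ)
          ≤ ((n + (1 + (ystar m0 i1).toNat)).descFactorial (ystar m0 i1).toNat : ℝ) *
            ((ystar m0 i2).toNat.descFactorial (ystar m0 i2).toNat : ℝ) := by
        exact_mod_cast hI0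
      have cz' : ((intensity d z (fun i => if i = i1 then ((n : ℤ) + 1) + ystar m i1
          else if i = i2 then ystar m i2 else 0) : ℕ) : ℝ)
          ≤ ((n + (1 + (ystar m i1).toNat)).descFactorial (z i1).toNat : ℝ) *
            ((ystar m i2).toNat.descFactorial (z i2).toNat : ℝ) := by
        exact_mod_cast hIz
      exact mul_le_mul c0' cz' (by positivity) (by positivity)
  by_cases hY : ∃ k'', 1 ≤ k'' ∧ k'' ≤ M ∧ ybar k'' = y
  · obtain ⟨k'', h''1, h''M, hbk''⟩ := hY
    rcases lt_trichotomy k'' k with hlt | heq | hgt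
    · apply Hconv y hysupp hynny hB
      rw [hym0, ← hbk, ← hbk'']
      have := hgap k'' k h''1 hlt hkM
      linarith
    · subst heq
      have hy : y = ystar m := by rw [← hbk'', hbk]
      exfalso
      apply hpne
      rw [hy, honly m hm1 hmM y' (by rwa [hy] at hr)]
    · exfalso
      have := hmono2 k'' h''M k hk1 hgt
      rw [hbk, hbk''] at this
      linarith
  · have hfy : f (y i1 + ybar 1 i1) < y i2 := by
      by_cases hCb : ComplexOf d Rbar y
      · exact hcompbar y hCb fun kk hk1 hk2 hEq => hY ⟨kk, hk1, hk2, hEq.symm⟩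
      · rcases hcompfull y ⟨(y, y'), hr, Or.inl rfl⟩ hCb with h | ⟨j, hj2, hjpos⟩
        · exact h
        · exfalso
          have g1 : j ≠ i1 := by intro h; rw [h] at hj2; omega
          have g2 : j ≠ i2 := by intro h; rw [h] at hj2; omega
          have := hysupp j g1 g2
          omega
    apply Hconv y hysupp hynny hB
    rw [hym0, ← hbk]
    by_contra hcon
    push_neg at hcon
    have h1 : ybar k i1 ≤ y i1 + ybar 1 i1 := by linarith
    have h2 := flb (M - k) k hk1 hkM (by omega) (y i1 + ybar 1 i1) h1
    have h3 : y i2 ≤ ybar k i2 := by rw [hbk]; exact hB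
    linarith
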